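/- Let α, α' be minimizers of the Lasso objective (1/2)‖x − Dz‖₂² + λ‖z‖₁ and (1/2)‖x − D'z‖₂² + λ‖z‖₁ respectively, with ‖x‖₂ ≤ 1 + ν and ‖D − D'‖₂ ≤ ε ≤ 2λ/(1+ν)². Then |‖Dα‖₂² − ‖D'α'‖₂²| ≤ (5ε/(2λ))(1+ν)². -/

import Mathlib

open scoped BigOperators
open Finset

noncomputable def l2 {n : ℕ} (x : Fin n → ℝ) : ℝ := Real.sqrt (∑ i, (x i) ^ 2)

noncomputable def l1 {n : ℕ} (x : Fin n → ℝ) : ℝ := ∑ i, |x i|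

noncomputable def inp {n : ℕ} (x y : Fin n → ℝ) : ℝ := ∑ i, x i * y i

/-- The Lasso objective `z ↦ (1/2)‖x − Dz‖₂² + λ‖z‖₁`. -/
noncomputable def lassoObj {d p : ℕ} (D : Matrix (Fin d) (Fin p) ℝ) (lam : ℝ)
    (x : Fin d → ℝ) (z : Fin p → ℝ) : ℝ :=
  (1 / 2) * (l2 (x - D.mulVec z)) ^ 2 + lam * l1 z

/-! Along the ray `t ↦ t • α` the Lasso objective is a quadratic in `t`; its minimum at `t = 1`
forces `⟪x - Dα, Dα⟫ = λ‖α‖₁`, hence the optimal value is `½‖x‖² - ½‖Dα‖²`. Comparing with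
`z = 0` bounds the residual by `1 + ν` and `λ‖α‖₁` by `½(1 + ν)²`, so swapping `D` for `D'` at
the minimizer `α` raises the objective by at most `5ε(1 + ν)²/(4λ)`. Used in both directions this
bounds the gap between the two optimal values, and the value identity turns it into the claim. -/

open Filter Topology Matrix RealInnerProductSpace

section InnerProductSpace

variable {E : Type*} [NormedAddCommGroup E] [InnerProductSpace ℝ E]

theorem inner_sub_eq_of_isLocalMin_smul {x u : E} {lam r : ℝ}
    (h : IsLocalMin (fun t : ℝ => ‖x - t • u‖ ^ 2 / 2 + lam * (t * r)) 1) :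
    ⟪x - u, u⟫ = lam * r := by
  have hd : HasDerivAt (fun t : ℝ => ‖x - t • u‖ ^ 2 / 2 + lam * (t * r))
      (2 * ⟪x - (1 : ℝ) • u, -((1 : ℝ) • u)⟫ / 2 + lam * (1 * r)) 1 :=
    ((((hasDerivAt_id (1 : ℝ)).smul_const u).const_sub x).norm_sq.div_const 2).add
      (((hasDerivAt_id (1 : ℝ)).mul_const r).const_mul lam)
  have := h.hasDerivAt_eq_zero hd
  simp only [one_smul, inner_neg_right, one_mul] at this
  linarith

theorem norm_sub_sq_div_two_add_inner (x u : E) :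
    ‖x - u‖ ^ 2 / 2 + ⟪x - u, u⟫ = ‖x‖ ^ 2 / 2 - ‖u‖ ^ 2 / 2 := by
  rw [norm_sub_sq_real, inner_sub_left, real_inner_self_eq_norm_sq]
  ring

end InnerProductSpace

theorem l2_eq_norm {n : ℕ} (v : Fin n → ℝ) : l2 v = ‖WithLp.toLp 2 v‖ := by
  simp [l2, EuclideanSpace.norm_eq]

theorem l2_nonneg {n : ℕ} (v : Fin n → ℝ) : 0 ≤ l2 v := Real.sqrt_nonneg _

theorem l2_add_le {n : ℕ} (v w : Fin n → ℝ) : l2 (v + w) ≤ l2 v + l2 w := by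
  simpa only [l2_eq_norm, WithLp.toLp_add] using norm_add_le (WithLp.toLp 2 v) (WithLp.toLp 2 w)

theorem l2_neg {n : ℕ} (v : Fin n → ℝ) : l2 (-v) = l2 v := by
  simp [l2]

theorem l2_le_l1 {n : ℕ} (v : Fin n → ℝ) : l2 v ≤ l1 v := by
  have := sum_sq_le_sq_sum_of_nonneg (s := univ) fun i _ => abs_nonneg (v i)
  simp only [sq_abs] at this
  exact Real.sqrt_le_iff.mpr ⟨sum_nonneg fun _ _ => abs_nonneg _, this⟩

theorem l1_nonneg {n : ℕ} (v : Fin n → ℝ) : 0 ≤ l1 v := sum_nonneg fun _ _ => abs_nonneg _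

section Lasso

variable {d p : ℕ} (D : Matrix (Fin d) (Fin p) ℝ) (lam : ℝ) (x : Fin d → ℝ)

theorem lassoObj_eq_norm (z : Fin p → ℝ) :
    lassoObj D lam x z = ‖WithLp.toLp 2 x - WithLp.toLp 2 (D *ᵥ z)‖ ^ 2 / 2 + lam * l1 z := by
  rw [lassoObj, l2_eq_norm, WithLp.toLp_sub]
  ring

theorem lassoObj_zero : lassoObj D lam x 0 = l2 x ^ 2 / 2 := by
  simp only [lassoObj, mulVec_zero, sub_zero, l1, Pi.zero_apply, abs_zero, sum_const_zero,
    mul_zero, add_zero]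
  ring

theorem lassoObj_smul {c : ℝ} (hc : 0 ≤ c) (z : Fin p → ℝ) :
    lassoObj D lam x (c • z) =
      ‖WithLp.toLp 2 x - c • WithLp.toLp 2 (D *ᵥ z)‖ ^ 2 / 2 + lam * (c * l1 z) := by
  simp only [lassoObj_eq_norm, Matrix.mulVec_smul, WithLp.toLp_smul, l1, Pi.smul_apply,
    smul_eq_mul, abs_mul, abs_of_nonneg hc, mul_sum]

variable {D lam x} {α : Fin p → ℝ}

theorem lasso_inner_residual_eq (hmin : ∀ z, lassoObj D lam x α ≤ lassoObj D lam x z) :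
    ⟪WithLp.toLp 2 (x - D *ᵥ α), WithLp.toLp 2 (D *ᵥ α)⟫ = lam * l1 α := by
  rw [WithLp.toLp_sub]
  refine inner_sub_eq_of_isLocalMin_smul ?_
  filter_upwards [Ioi_mem_nhds one_pos] with t ht
  rw [← lassoObj_smul D lam x zero_le_one, one_smul, ← lassoObj_smul D lam x (le_of_lt ht)]
  exact hmin (t • α)

theorem lassoObj_eq_of_forall_le (hmin : ∀ z, lassoObj D lam x α ≤ lassoObj D lam x z) :
    lassoObj D lam x α = l2 x ^ 2 / 2 - l2 (D *ᵥ α) ^ 2 / 2 := by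
  rw [lassoObj_eq_norm, l2_eq_norm, l2_eq_norm, ← lasso_inner_residual_eq hmin,
    ← norm_sub_sq_div_two_add_inner, WithLp.toLp_sub]

theorem lassoObj_le_add_of_forall_le {D' : Matrix (Fin d) (Fin p) ℝ} {ε ρ : ℝ} (hlam : 0 < lam)
    (hε : 0 ≤ ε) (hρ : ρ ≤ 2) (hερ : ε * ρ ^ 2 ≤ 2 * lam) (hx : l2 x ≤ ρ)
    (hop : ∀ z, l2 ((D - D') *ᵥ z) ≤ ε * l2 z)
    (hmin : ∀ z, lassoObj D lam x α ≤ lassoObj D lam x z) :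
    lassoObj D' lam x α ≤ lassoObj D lam x α + 5 * ε * ρ ^ 2 / (4 * lam) := by
  set r := l2 (x - D *ᵥ α)
  set e := l2 ((D - D') *ᵥ α)
  have hρ0 : 0 ≤ ρ := (l2_nonneg x).trans hx
  have hbudget : r ^ 2 / 2 + lam * l1 α ≤ ρ ^ 2 / 2 := calc
    r ^ 2 / 2 + lam * l1 α = lassoObj D lam x α := by rw [lassoObj]; ring
    _ ≤ lassoObj D lam x 0 := hmin 0
    _ = l2 x ^ 2 / 2 := lassoObj_zero D lam x
    _ ≤ ρ ^ 2 / 2 := by gcongr; exact l2_nonneg x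
  have hr : r ≤ ρ := by nlinarith [l2_nonneg (x - D *ᵥ α), mul_nonneg hlam.le (l1_nonneg α)]
  have hl1 : l1 α ≤ ρ ^ 2 / (2 * lam) := by
    rw [le_div_iff₀ (by positivity)]
    nlinarith [sq_nonneg r]
  have he : e ≤ ε * ρ ^ 2 / (2 * lam) := calc
    e ≤ ε * l2 α := hop α
    _ ≤ ε * l1 α := mul_le_mul_of_nonneg_left (l2_le_l1 α) hε
    _ ≤ ε * (ρ ^ 2 / (2 * lam)) := mul_le_mul_of_nonneg_left hl1 hε
    _ = ε * ρ ^ 2 / (2 * lam) := by ring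
  have hE1 : ε * ρ ^ 2 / (2 * lam) ≤ 1 := (div_le_one (by positivity)).mpr hερ
  have hsplit : x - D' *ᵥ α = (x - D *ᵥ α) + (D - D') *ᵥ α := by
    rw [Matrix.sub_mulVec]
    abel
  have hfive : 5 * ε * ρ ^ 2 / (4 * lam) = 5 / 2 * (ε * ρ ^ 2 / (2 * lam)) := by ring
  calc lassoObj D' lam x α = l2 ((x - D *ᵥ α) + (D - D') *ᵥ α) ^ 2 / 2 + lam * l1 α := by
        rw [lassoObj, hsplit]
        ring
    _ ≤ (r + e) ^ 2 / 2 + lam * l1 α := by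
        gcongr
        exacts [l2_nonneg _, l2_add_le _ _]
    _ ≤ lassoObj D lam x α + 5 * ε * ρ ^ 2 / (4 * lam) := by
        rw [lassoObj, hfive]
        nlinarith [mul_le_mul hr he (l2_nonneg _) hρ0, l2_nonneg ((D - D') *ᵥ α)]

end Lasso

/-- stability of the norm of the Lasso reconstruction under dictionary perturbations. -/
theorem stmt6 {d p : ℕ} (D D' : Matrix (Fin d) (Fin p) ℝ) (lam ν ε : ℝ)
    (hlam : 0 < lam) (hν : 0 ≤ ν) (hν1 : ν ≤ 1) (hε0 : 0 ≤ ε)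
    (hε : ε ≤ 2 * lam / (1 + ν) ^ 2)
    (x : Fin d → ℝ) (hx : l2 x ≤ 1 + ν)
    (hop : ∀ z : Fin p → ℝ, l2 ((D - D').mulVec z) ≤ ε * l2 z)
    (α : Fin p → ℝ) (hmin : ∀ z, lassoObj D lam x α ≤ lassoObj D lam x z)
    (α' : Fin p → ℝ) (hmin' : ∀ z, lassoObj D' lam x α' ≤ lassoObj D' lam x z) :
    |(l2 (D.mulVec α)) ^ 2 - (l2 (D'.mulVec α')) ^ 2| ≤ (5 * ε / (2 * lam)) * (1 + ν) ^ 2 := by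
  have hερ : ε * (1 + ν) ^ 2 ≤ 2 * lam := (le_div_iff₀ (by positivity)).mp hε
  have hop' : ∀ z, l2 ((D' - D) *ᵥ z) ≤ ε * l2 z := fun z => by
    rw [← neg_sub, Matrix.neg_mulVec, l2_neg]
    exact hop z
  have hρ : 1 + ν ≤ 2 := by linarith
  have hDD' := lassoObj_le_add_of_forall_le hlam hε0 hρ hερ hx hop hmin
  have hD'D := lassoObj_le_add_of_forall_le hlam hε0 hρ hερ hx hop' hmin'
  have hv := lassoObj_eq_of_forall_le hmin
  have hv' := lassoObj_eq_of_forall_le hmin'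
  have hbound : 5 * ε / (2 * lam) * (1 + ν) ^ 2 = 2 * (5 * ε * (1 + ν) ^ 2 / (4 * lam)) := by
    ring
  rw [hbound, abs_le]
  constructor <;> linarith [hmin α', hmin' α]
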